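/- For every positive integer m and every μ > 0, the critical value satisfies α_m(μ) < 0, and for α = α_m(μ) the quartic h_{m,μ,α} has a negative double real root: there exists z < 0 with h_{m,μ,α}(z) = 0 and h′_{m,μ,α}(z) = 0. -/

import Mathlib

/-!
Eliminating `α` from `h(z) = h'(z) = 0` (i.e. substituting `α = 4z³ − 4m²z`) leaves
`3z⁴ − 2m²z² − (m⁴ + μm²) = 0`, a quadratic in `z²` whose positive root is
`t = (m² + m√(4m² + 3μ))/3`. At `z = −√t` the relation `α = 4z³ − 4m²z` is exactly
`α = α_m(μ)`, which is negative because `√(4m² + 3μ) > 2m` when `μ > 0`.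
-/

/-- The characteristic quartic `h_{m,μ,α}(z) = z⁴ − 2m²z² − αz + m⁴ + μm²` of the ODE
`ψ⁗ − 2m²ψ″ − αψ′ + (m⁴ + μm²)ψ = 0`. -/
noncomputable def hQuartic (m : ℕ) (μ α : ℝ) : ℝ → ℝ :=
  fun z => z ^ 4 - 2 * (m : ℝ) ^ 2 * z ^ 2 - α * z + (m : ℝ) ^ 4 + μ * (m : ℝ) ^ 2

/-- The critical value
`α_m(μ) = −(4m/(3√3)) (√(4m² + 3μ) − 2m) √(m² + m√(4m² + 3μ))`. -/
noncomputable def alphaCrit (m : ℕ) (μ : ℝ) : ℝ :=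
  -(4 * (m : ℝ) / (3 * Real.sqrt 3)) * (Real.sqrt (4 * (m : ℝ) ^ 2 + 3 * μ) - 2 * (m : ℝ)) *
    Real.sqrt ((m : ℝ) ^ 2 + (m : ℝ) * Real.sqrt (4 * (m : ℝ) ^ 2 + 3 * μ))

open Real

theorem hasDerivAt_hQuartic (m : ℕ) (μ α z : ℝ) :
    HasDerivAt (hQuartic m μ α) (4 * z ^ 3 - 4 * (m : ℝ) ^ 2 * z - α) z := by
  have h := ((((hasDerivAt_pow 4 z).sub ((hasDerivAt_pow 2 z).const_mul (2 * (m : ℝ) ^ 2))).sub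
    ((hasDerivAt_id z).const_mul α)).add_const ((m : ℝ) ^ 4)).add_const (μ * (m : ℝ) ^ 2)
  refine h.congr_deriv ?_
  push_cast
  ring

noncomputable def doubleRoot (m : ℕ) (μ : ℝ) : ℝ :=
  -√(((m : ℝ) ^ 2 + m * √(4 * (m : ℝ) ^ 2 + 3 * μ)) / 3)

theorem doubleRoot_neg {m : ℕ} (hm : 0 < m) (μ : ℝ) : doubleRoot m μ < 0 := by
  have hM : (0 : ℝ) < m := Nat.cast_pos.mpr hm
  rw [doubleRoot, neg_lt_zero, sqrt_pos]
  positivity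

theorem doubleRoot_sq (m : ℕ) (μ : ℝ) :
    doubleRoot m μ ^ 2 = ((m : ℝ) ^ 2 + m * √(4 * (m : ℝ) ^ 2 + 3 * μ)) / 3 := by
  rw [doubleRoot, neg_sq, sq_sqrt]
  positivity

theorem alphaCrit_eq_mul_doubleRoot (m : ℕ) (μ : ℝ) :
    alphaCrit m μ =
      -(4 * (m : ℝ) / 3) * (√(4 * (m : ℝ) ^ 2 + 3 * μ) - 2 * m) * -doubleRoot m μ := by
  have hsplit : √((m : ℝ) ^ 2 + m * √(4 * (m : ℝ) ^ 2 + 3 * μ)) = √3 * -doubleRoot m μ := by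
    rw [doubleRoot, neg_neg, ← sqrt_mul (by norm_num), mul_div_cancel₀ _ (by norm_num)]
  rw [alphaCrit, hsplit]
  field_simp

theorem alphaCrit_eq_four_doubleRoot_cube_sub (m : ℕ) (μ : ℝ) :
    alphaCrit m μ = 4 * doubleRoot m μ ^ 3 - 4 * (m : ℝ) ^ 2 * doubleRoot m μ := by
  rw [alphaCrit_eq_mul_doubleRoot]
  linear_combination (-4 * doubleRoot m μ) * doubleRoot_sq m μ

theorem alphaCrit_neg {m : ℕ} (hm : 0 < m) {μ : ℝ} (hμ : 0 < μ) : alphaCrit m μ < 0 := by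
  have hM : (0 : ℝ) < m := Nat.cast_pos.mpr hm
  have hs : 2 * (m : ℝ) < √(4 * (m : ℝ) ^ 2 + 3 * μ) := by
    rw [lt_sqrt (by positivity)]
    linarith
  have hz : 0 < -doubleRoot m μ := neg_pos.mpr (doubleRoot_neg hm μ)
  rw [alphaCrit_eq_mul_doubleRoot]
  nlinarith [mul_pos (mul_pos hM (sub_pos.mpr hs)) hz]

theorem hQuartic_alphaCrit_doubleRoot (m : ℕ) {μ : ℝ} (hμ : 0 ≤ μ) :
    hQuartic m μ (alphaCrit m μ) (doubleRoot m μ) = 0 := by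
  have hs : √(4 * (m : ℝ) ^ 2 + 3 * μ) ^ 2 = 4 * (m : ℝ) ^ 2 + 3 * μ := sq_sqrt (by positivity)
  rw [hQuartic, alphaCrit_eq_four_doubleRoot_cube_sub]
  linear_combination (-3 * doubleRoot m μ ^ 2 + (m : ℝ) ^ 2 - m * √(4 * (m : ℝ) ^ 2 + 3 * μ))
    * doubleRoot_sq m μ - ((m : ℝ) ^ 2 / 3) * hs

theorem alphaCrit_neg_and_double_root (m : ℕ) (hm : 0 < m) (μ : ℝ) (hμ : 0 < μ) :
    alphaCrit m μ < 0 ∧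
      ∃ z : ℝ, z < 0 ∧ hQuartic m μ (alphaCrit m μ) z = 0 ∧
        deriv (hQuartic m μ (alphaCrit m μ)) z = 0 := by
  refine ⟨alphaCrit_neg hm hμ, doubleRoot m μ, doubleRoot_neg hm μ,
    hQuartic_alphaCrit_doubleRoot m hμ.le, ?_⟩
  rw [(hasDerivAt_hQuartic m μ _ _).deriv, alphaCrit_eq_four_doubleRoot_cube_sub, sub_self]
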